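/- Let q = (τ⁺, τ⁻, ℘) be a couple. For a node n of q define the ℘ × ℘ matrix Γ^q_n by Γ^q_n(p₁, p₂) = (1_{n ⪰ l₁⁺} − 1_{n ⪰ l₁⁻})·(1_{n ⪰ l₂⁺} − 1_{n ⪰ l₂⁻}) for leaf pairs p₁ = {l₁⁺, l₁⁻} and p₂ = {l₂⁺, l₂⁻} in ℘ (with l⁺ the positive and l⁻ the negative leaf of each pair). Then for every map λ from the nodes of q to ℂ, the following three statements are equivalent: (i) Σ_{n ∈ c} λ_n = 0 for every conjugacy class c of q; (ii) Σ_{n ∈ B} λ_n = 0 for every B ∈ U^q = {A_{p₁} ∩ A_{p₂} : p₁, p₂ ∈ ℘}; (iii) Σ_{n} λ_n·Γ^q_n(p₁, p₂) = 0 for all p₁, p₂ ∈ ℘. -/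
import Mathlib


noncomputable section
open scoped Classical

namespace WickNLS

/-! ## Ternary trees, signed ternary trees and couples -/

/-- Ternary trees: every non-leaf (branching) node has three ordered children. -/
inductive TTree : Type
  | leaf : TTree
  | node : TTree → TTree → TTree → TTree
deriving DecidableEq

namespace TTree

/-- The order of a ternary tree: the number of its branching nodes. -/
def order : TTree → ℕ
  | leaf => 0
  | node a b c => order a + order b + order c + 1

/-- The subtree of `t` at the path `p` from the root (child indices `0,1,2` denote the
left, middle and right child, respectively), if `p` is a valid path. -/
def sub : TTree → List (Fin 3) → Option TTree
  | t, [] => some t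
  | leaf, _ :: _ => none
  | node a b c, i :: p => sub (if i = 0 then a else if i = 1 then b else c) p

/-- `p` is (the path of) a node of `t`. -/
def valid (t : TTree) (p : List (Fin 3)) : Prop := (t.sub p).isSome = true

/-- `p` is (the path of) a leaf node of `t`. -/
def isLeaf (t : TTree) (p : List (Fin 3)) : Prop := t.sub p = some leaf

/-- `p` is (the path of) a branching node of `t`. -/
def isBranch (t : TTree) (p : List (Fin 3)) : Prop := ∃ a b c, t.sub p = some (node a b c)

/-- Replace the subtree at the path `p` by `r`. -/
def replace : TTree → List (Fin 3) → TTree → TTree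
  | _, [], r => r
  | leaf, _ :: _, _ => leaf
  | node a b c, i :: p, r =>
      if i = 0 then node (replace a p r) b c
      else if i = 1 then node a (replace b p r) c
      else node a b (replace c p r)

end TTree

/-- The sign `ι` of the node at path `p` of a signed ternary tree whose root carries the
sign `σ`: because `ι_{b[j]} = ι_b · (-1)^(j+1)`, the sign is kept by the two outer
children and flipped by the middle child. -/
def nodeSign (σ : ℤ) (p : List (Fin 3)) : ℤ := σ * (-1) ^ (p.count (1 : Fin 3))

/-- Nodes of a couple: `(true, p)` is the node at path `p` of the positive tree `τ⁺`,
and `(false, p)` is the node at path `p` of the negative tree `τ⁻`. -/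
abbrev CNode : Type := Bool × List (Fin 3)

/-- The (raw data of a) couple `(τ⁺, τ⁻, ℘)`: a positive tree `tp`, a negative tree `tm`,
the pairing `pr` sending each leaf of `tp` to its partner leaf of `tm`, and the inverse
pairing `pl`. -/
structure Couple : Type where
  tp : TTree
  tm : TTree
  pr : List (Fin 3) → List (Fin 3)
  pl : List (Fin 3) → List (Fin 3)

namespace Couple

/-- The tree of the given side of the couple (`true` ↦ positive tree). -/
def tree (q : Couple) (b : Bool) : TTree := if b then q.tp else q.tm

/-- The sign of a node of a couple (the root of `τ⁺` has sign `+1`, that of `τ⁻` has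
sign `-1`). -/
def sign (x : CNode) : ℤ := nodeSign (if x.1 then 1 else -1) x.2

/-- `x` is a node of the couple `q`. -/
def isNode (q : Couple) (x : CNode) : Prop := (q.tree x.1).valid x.2

/-- `x` is a leaf of the couple `q`. -/
def isLeafN (q : Couple) (x : CNode) : Prop := (q.tree x.1).isLeaf x.2

/-- `x` is a branching node of the couple `q`. -/
def isBranchN (q : Couple) (x : CNode) : Prop := (q.tree x.1).isBranch x.2

/-- Well-formedness of a couple: the two trees have the same order; `pr` is a bijection
(with inverse `pl`) from the leaves of the positive tree onto the leaves of the negative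
tree, pairing leaves of opposite signs.  The fields `pr_norm` and `pl_norm` normalize the
(irrelevant) values of `pr` and `pl` off their domains, so that equality of raw couples
is equality of couples. -/
structure IsCouple (q : Couple) : Prop where
  order_eq : q.tp.order = q.tm.order
  pr_leaf : ∀ l, q.tp.isLeaf l → q.tm.isLeaf (q.pr l)
  pl_leaf : ∀ l, q.tm.isLeaf l → q.tp.isLeaf (q.pl l)
  pl_pr : ∀ l, q.tp.isLeaf l → q.pl (q.pr l) = l
  pr_pl : ∀ l, q.tm.isLeaf l → q.pr (q.pl l) = l
  sign_pr : ∀ l, q.tp.isLeaf l → sign (false, q.pr l) = - sign (true, l)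
  pr_norm : ∀ l, ¬ q.tp.isLeaf l → q.pr l = []
  pl_norm : ∀ l, ¬ q.tm.isLeaf l → q.pl l = []

/-- The set `A_p` attached to the leaf pair `p = {(true, l), (false, q.pr l)}`
(indexed by the leaf `l` of the positive tree): the set of all nodes `m` of `q` with
`m ⪰ (true, l)` or `m ⪰ (false, q.pr l)`, i.e. all weak ancestors of the two
paired leaves. -/
def pairSet (q : Couple) (l : List (Fin 3)) : Set CNode :=
  {x | (x.1 = true ∧ x.2 <+: l) ∨ (x.1 = false ∧ x.2 <+: q.pr l)}

/-- Two nodes `x, y` of `q` are conjugate, `x ∼ y`, if for every leaf pair `p ∈ ℘`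
either both belong to `A_p` or neither does. -/
def Conj (q : Couple) (x y : CNode) : Prop :=
  ∀ l, q.tp.isLeaf l →
    ((x ∈ q.pairSet l ∧ y ∈ q.pairSet l) ∨ (x ∉ q.pairSet l ∧ y ∉ q.pairSet l))

/-- The leaf of the leaf pair indexed by the `tp`-leaf `l` carrying the sign `+1`. -/
def posLeaf (q : Couple) (l : List (Fin 3)) : CNode :=
  if sign (true, l) = 1 then ((true, l) : CNode) else ((false, q.pr l) : CNode)

/-- The leaf of the leaf pair indexed by the `tp`-leaf `l` carrying the sign `-1`. -/
def negLeaf (q : Couple) (l : List (Fin 3)) : CNode :=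
  if sign (true, l) = 1 then ((false, q.pr l) : CNode) else ((true, l) : CNode)

end Couple

/-- `x` is a weak ancestor of `y` (i.e. `x ⪰ y` fails ... this states `y ⪯ x` in the
subtree order: `y` lies in the subtree rooted at `x`), as nodes of a couple. -/
def anc (x y : CNode) : Prop := x.1 = y.1 ∧ x.2 <+: y.2

/-- The indicator `1_{x ⪰ y}` (i.e. `x` is a weak ancestor of `y`), with values in `ℤ`. -/
def ind1 (x y : CNode) : ℤ := if anc x y then 1 else 0

/-- The matrix `Γ^q_x(p₁, p₂)`, with the leaf pairs indexed by the leaves `l₁, l₂` of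
the positive tree:
`Γ^q_x(p₁,p₂) = (1_{x ⪰ l₁⁺} − 1_{x ⪰ l₁⁻}) · (1_{x ⪰ l₂⁺} − 1_{x ⪰ l₂⁻})`,
where `lᵢ⁺` (resp. `lᵢ⁻`) is the positive (resp. negative) leaf of the pair. -/
def gam (q : Couple) (x : CNode) (l₁ l₂ : List (Fin 3)) : ℤ :=
  (ind1 x (q.posLeaf l₁) - ind1 x (q.negLeaf l₁)) *
    (ind1 x (q.posLeaf l₂) - ind1 x (q.negLeaf l₂))

/-! ### Auxiliary list lemmas -/

lemma getElem?_of_prefix {α : Type*} {r u : List α} (h : r <+: u) {n : ℕ} (hn : n < r.length) :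
    u[n]? = r[n]? := by
  obtain ⟨t, rfl⟩ := h
  rw [List.getElem?_append, if_pos hn]

lemma prefix_of_diverge {α : Type*} {r u v p : List α} (hru : r <+: u) (hrv : r <+: v)
    (hpu : p <+: u) (hne : u[p.length]? ≠ v[p.length]?) : r <+: p := by
  rcases le_or_gt r.length p.length with h | h
  · exact List.prefix_of_prefix_length_le hru hpu h
  · exact absurd ((getElem?_of_prefix hru h).trans (getElem?_of_prefix hrv h).symm) hne

lemma snoc_prefix {α : Type*} {p u : List α} {i : α} (h : p <+: u)
    (hi : u[p.length]? = some i) : p ++ [i] <+: u := by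
  obtain ⟨t, rfl⟩ := h
  rcases t with _ | ⟨a, t⟩
  · simp at hi
  · have : a = i := by
      rw [List.getElem?_append_right le_rfl] at hi
      simpa using hi
    subst this
    exact ⟨t, by simp⟩

lemma finite_prefixes {α : Type*} (u : List α) : {r : List α | r <+: u}.Finite := by
  apply (Set.finite_range (fun n : Fin (u.length + 1) => u.take n)).subset
  rintro r hr
  have hl : r.length ≤ u.length := hr.length_le
  refine ⟨⟨r.length, by omega⟩, ?_⟩
  simpa using (List.prefix_iff_eq_take.mp hr).symm

/-! ### Auxiliary tree lemmas -/

namespace TTree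

lemma sub_nil (t : TTree) : t.sub [] = some t := by cases t <;> rfl

lemma sub_append (t : TTree) (p r : List (Fin 3)) :
    t.sub (p ++ r) = (t.sub p).bind (fun s => s.sub r) := by
  induction p generalizing t with
  | nil => simp [sub]
  | cons i p ih =>
    cases t with
    | leaf => simp [sub]
    | node a b c => simp [sub, ih]

lemma valid_of_prefix {t : TTree} {p r : List (Fin 3)} (h : r <+: p) (hv : t.valid p) :
    t.valid r := by
  obtain ⟨s, rfl⟩ := h
  unfold valid at *
  rw [sub_append] at hv
  cases h' : t.sub r <;> simp [h'] at hv ⊢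

lemma valid_of_isLeaf {t : TTree} {l : List (Fin 3)} (h : t.isLeaf l) : t.valid l := by
  unfold valid; rw [h]; rfl

lemma exists_isLeaf (t : TTree) : ∃ l, t.isLeaf l := by
  induction t with
  | leaf => exact ⟨[], rfl⟩
  | node a b c iha ihb ihc =>
    obtain ⟨l, hl⟩ := iha
    exact ⟨0 :: l, by simpa [isLeaf, sub] using hl⟩

lemma exists_leaf_above {t : TTree} {p : List (Fin 3)} (hv : t.valid p) :
    ∃ l, t.isLeaf l ∧ p <+: l := by
  obtain ⟨s, hs⟩ := Option.isSome_iff_exists.mp hv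
  obtain ⟨l, hl⟩ := exists_isLeaf s
  exact ⟨p ++ l, by simp [isLeaf, sub_append, hs, hl.symm] , ⟨l, rfl⟩⟩

lemma eq_of_isLeaf_prefix {t : TTree} {l m : List (Fin 3)} (hl : t.isLeaf l)
    (hm : t.valid m) (h : l <+: m) : l = m := by
  obtain ⟨r, rfl⟩ := h
  unfold valid at hm
  rw [sub_append, hl] at hm
  rcases r with _ | ⟨i, r⟩
  · simp
  · simp [sub] at hm

lemma finite_valid (t : TTree) : {p | t.valid p}.Finite := by
  induction t with
  | leaf =>
    apply (Set.finite_singleton ([] : List (Fin 3))).subset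
    rintro (_ | ⟨i, p⟩) hp
    · simp
    · simp [valid, sub] at hp
  | node a b c iha ihb ihc =>
    apply (((Set.finite_singleton ([] : List (Fin 3))).union
      ((iha.image (List.cons 0)).union ((ihb.image (List.cons 1)).union
        (ihc.image (List.cons 2))))).subset)
    rintro (_ | ⟨i, p⟩) hp
    · simp
    · have hp' : valid (if i = 0 then a else if i = 1 then b else c) p := hp
      fin_cases i
      · exact Or.inr (Or.inl ⟨p, by simpa using hp', rfl⟩)
      · exact Or.inr (Or.inr (Or.inl ⟨p, by simpa using hp', rfl⟩))
      · exact Or.inr (Or.inr (Or.inr ⟨p, by simpa using hp', rfl⟩))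

lemma finite_isLeaf (t : TTree) : {p | t.isLeaf p}.Finite :=
  (finite_valid t).subset fun _ h => valid_of_isLeaf h

end TTree

/-! ### The key combinatorial lemma -/

open TTree in
lemma main_exists (t : TTree) (f : List (Fin 3) → List (Fin 3))
    (hfinj : ∀ m m', t.isLeaf m → t.isLeaf m' → f m = f m' → m = m')
    {p : List (Fin 3)} (hp : t.valid p) :
    ∃ m₁ m₂, t.isLeaf m₁ ∧ t.isLeaf m₂ ∧ p <+: m₁ ∧ p <+: m₂ ∧
      (∀ r, r <+: m₁ → r <+: m₂ → r <+: p) ∧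
      (∀ r, r <+: f m₁ → r <+: f m₂ → ∀ m, t.isLeaf m → p <+: m → r <+: f m) := by
  obtain ⟨s, hs⟩ := Option.isSome_iff_exists.mp hp
  cases s with
  | leaf =>
    refine ⟨p, p, hs, hs, List.prefix_refl p, List.prefix_refl p, fun r hr _ => hr, ?_⟩
    intro r hr _ m hm hpm
    have : p = m := eq_of_isLeaf_prefix hs (valid_of_isLeaf hm) hpm
    subst this; exact hr
  | node a b c =>
    have hSi : ∀ i : Fin 3, ∃ m, t.isLeaf m ∧ (p ++ [i]) <+: m := by
      intro i
      apply exists_leaf_above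
      have : t.sub (p ++ [i]) = some (if i = 0 then a else if i = 1 then b else c) := by
        rw [sub_append, hs]
        show TTree.sub (TTree.node a b c) [i] = _
        rw [show TTree.sub (TTree.node a b c) [i]
            = TTree.sub (if i = 0 then a else if i = 1 then b else c) [] from rfl, sub_nil]
      unfold valid
      rw [this]; rfl
    have hidx : ∀ m, t.isLeaf m → p <+: m → ∃ i : Fin 3, m[p.length]? = some i := by
      intro m hm hpm
      obtain ⟨w, rfl⟩ := hpm
      rcases w with _ | ⟨i, w⟩
      · rw [List.append_nil] at hm; rw [hm] at hs; exact absurd hs (by simp)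
      · exact ⟨i, by rw [List.getElem?_append_right le_rfl]; simp⟩
    have hidxi : ∀ (i : Fin 3) m, (p ++ [i]) <+: m → m[p.length]? = some i := by
      intro i m him
      rw [getElem?_of_prefix him (by simp)]
      rw [List.getElem?_append_right le_rfl]; simp
    set CP : Set (List (Fin 3)) := {r | ∀ m, t.isLeaf m → p <+: m → r <+: f m} with hCP
    obtain ⟨m₀, hm₀l, hm₀p⟩ := hSi 0
    have hm₀p' : p <+: m₀ := (List.prefix_append p [(0 : Fin 3)]).trans hm₀p
    have hCPfin : CP.Finite := by
      apply (finite_prefixes (f m₀)).subset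
      intro r hr
      exact hr m₀ hm₀l hm₀p'
    have hCPne : CP.Nonempty := ⟨[], fun m _ _ => List.nil_prefix⟩
    obtain ⟨cc, hccCP, hccmax⟩ := Finset.exists_max_image hCPfin.toFinset List.length
      (by simpa using hCPne)
    rw [Set.Finite.mem_toFinset] at hccCP
    have hccmax' : ∀ r ∈ CP, r.length ≤ cc.length := by
      intro r hr; exact hccmax r (by simpa using hr)
    have hnc : ∃ u v, (t.isLeaf u ∧ p <+: u) ∧ (t.isLeaf v ∧ p <+: v) ∧
        (f u)[cc.length]? ≠ (f v)[cc.length]? := by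
      by_contra hcon
      push_neg at hcon
      obtain ⟨m₁', hm₁l, hm₁p⟩ := hSi 0
      obtain ⟨m₂', hm₂l, hm₂p⟩ := hSi 1
      have hm₁p' : p <+: m₁' := (List.prefix_append _ _).trans hm₁p
      have hm₂p' : p <+: m₂' := (List.prefix_append _ _).trans hm₂p
      have hne : m₁' ≠ m₂' := by
        intro h
        have h1 := hidxi 0 m₁' hm₁p
        have h2 := hidxi 1 m₂' hm₂p
        rw [h] at h1; rw [h1] at h2
        simp at h2
      rcases h0 : (f m₁')[cc.length]? with _ | i
      · have key : ∀ m, t.isLeaf m → p <+: m → f m = cc := by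
          intro m hm hpm
          have hpre : cc <+: f m := hccCP m hm hpm
          have := hcon m m₁' ⟨hm, hpm⟩ ⟨hm₁l, hm₁p'⟩
          rw [h0] at this
          have hlen : (f m).length ≤ cc.length := by
            by_contra hlen
            push_neg at hlen
            rcases List.getElem?_eq_some_iff.mpr ⟨hlen, rfl⟩ with h'
            rw [this] at h'
            exact absurd h' (by simp)
          exact (List.IsPrefix.eq_of_length_le hpre hlen).symm
        exact hne (hfinj _ _ hm₁l hm₂l (by rw [key _ hm₁l hm₁p', key _ hm₂l hm₂p']))
      · have : cc ++ [i] ∈ CP := by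
          intro m hm hpm
          apply snoc_prefix (hccCP m hm hpm)
          rw [hcon m m₁' ⟨hm, hpm⟩ ⟨hm₁l, hm₁p'⟩, h0]
        have := hccmax' _ this
        simp at this
    obtain ⟨u, v, ⟨hul, hup⟩, ⟨hvl, hvp⟩, huv⟩ := hnc
    obtain ⟨iu, hiu⟩ := hidx u hul hup
    obtain ⟨iv, hiv⟩ := hidx v hvl hvp
    have final : ∃ m₁ m₂, (t.isLeaf m₁ ∧ p <+: m₁) ∧ (t.isLeaf m₂ ∧ p <+: m₂) ∧
        m₁[p.length]? ≠ m₂[p.length]? ∧ (f m₁)[cc.length]? ≠ (f m₂)[cc.length]? := by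
      by_cases hiuv : iu = iv
      · obtain ⟨j, hj⟩ : ∃ j : Fin 3, j ≠ iu := by
          rcases exists_ne iu with ⟨j, hj⟩; exact ⟨j, hj⟩
        obtain ⟨w, hwl, hwp⟩ := hSi j
        have hwp' : p <+: w := (List.prefix_append _ _).trans hwp
        have hwj : w[p.length]? = some j := hidxi j w hwp
        by_cases hwu : (f w)[cc.length]? = (f u)[cc.length]?
        · exact ⟨w, v, ⟨hwl, hwp'⟩, ⟨hvl, hvp⟩,
            by rw [hwj, hiv, ← hiuv]; simpa using hj,
            by rw [hwu]; exact huv⟩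
        · exact ⟨w, u, ⟨hwl, hwp'⟩, ⟨hul, hup⟩,
            by rw [hwj, hiu]; simpa using hj, hwu⟩
      · exact ⟨u, v, ⟨hul, hup⟩, ⟨hvl, hvp⟩,
          by rw [hiu, hiv]; simpa using hiuv, huv⟩
    obtain ⟨m₁, m₂, ⟨h1l, h1p⟩, ⟨h2l, h2p⟩, hd1, hd2⟩ := final
    refine ⟨m₁, m₂, h1l, h2l, h1p, h2p, ?_, ?_⟩
    · intro r hr1 hr2
      exact prefix_of_diverge hr1 hr2 h1p hd1
    · intro r hr1 hr2 m hm hpm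
      have : r <+: cc := prefix_of_diverge hr1 hr2 (hccCP m₁ h1l h1p) hd2
      exact this.trans (hccCP m hm hpm)

/-! ### Couple-level lemmas -/

lemma mem_pairSet {q : Couple} {x : CNode} {l : List (Fin 3)} :
    x ∈ q.pairSet l ↔ (x.1 = true ∧ x.2 <+: l) ∨ (x.1 = false ∧ x.2 <+: q.pr l) := Iff.rfl

lemma isNode_of_mem_pairSet {q : Couple} (hq : q.IsCouple) {l} (hl : q.tp.isLeaf l)
    {x : CNode} (hx : x ∈ q.pairSet l) : q.isNode x := by
  rcases x with ⟨b, r⟩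
  rcases hx with ⟨hb, hr⟩ | ⟨hb, hr⟩ <;> (simp only at hb; subst hb)
  · exact TTree.valid_of_prefix hr (TTree.valid_of_isLeaf hl)
  · exact TTree.valid_of_prefix hr (TTree.valid_of_isLeaf (hq.pr_leaf l hl))

lemma finite_isNode (q : Couple) : {x : CNode | q.isNode x}.Finite := by
  apply Set.Finite.subset (((q.tp.finite_valid).image (Prod.mk true)).union
    ((q.tm.finite_valid).image (Prod.mk false)))
  rintro ⟨b, r⟩ h
  cases b
  · exact Or.inr ⟨r, h, rfl⟩
  · exact Or.inl ⟨r, h, rfl⟩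

lemma exists_good_pair {q : Couple} (hq : q.IsCouple) {x : CNode} (hx : q.isNode x) :
    ∃ l₁ l₂, q.tp.isLeaf l₁ ∧ q.tp.isLeaf l₂ ∧ x ∈ q.pairSet l₁ ∧ x ∈ q.pairSet l₂ ∧
      ∀ y : CNode, y ∈ q.pairSet l₁ → y ∈ q.pairSet l₂ →
        ∀ l, q.tp.isLeaf l → x ∈ q.pairSet l → y ∈ q.pairSet l := by
  rcases x with ⟨b, p⟩
  cases b
  · -- x is a node of the negative tree
    have hx' : q.tm.valid p := hx
    obtain ⟨m₁, m₂, h1l, h2l, h1p, h2p, hC1, hC2⟩ :=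
      main_exists q.tm q.pl
        (fun m m' hm hm' h => by
          have := congrArg q.pr h
          rwa [hq.pr_pl m hm, hq.pr_pl m' hm'] at this) hx'
    refine ⟨q.pl m₁, q.pl m₂, hq.pl_leaf _ h1l, hq.pl_leaf _ h2l,
      Or.inr ⟨rfl, by rw [hq.pr_pl _ h1l]; exact h1p⟩,
      Or.inr ⟨rfl, by rw [hq.pr_pl _ h2l]; exact h2p⟩, ?_⟩
    rintro ⟨c, r⟩ hy1 hy2 l hl hxl
    have hxl' : p <+: q.pr l := by
      rcases hxl with ⟨h, _⟩ | ⟨_, h⟩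
      · exact absurd h (by simp)
      · exact h
    have hprS : q.tm.isLeaf (q.pr l) := hq.pr_leaf l hl
    cases c
    · -- y in the negative tree
      have hr1 : r <+: m₁ := by
        rcases hy1 with ⟨h, _⟩ | ⟨_, h⟩
        · exact absurd h (by simp)
        · rwa [hq.pr_pl _ h1l] at h
      have hr2 : r <+: m₂ := by
        rcases hy2 with ⟨h, _⟩ | ⟨_, h⟩
        · exact absurd h (by simp)
        · rwa [hq.pr_pl _ h2l] at h
      exact Or.inr ⟨rfl, (hC1 r hr1 hr2).trans hxl'⟩
    · -- y in the positive tree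
      have hr1 : r <+: q.pl m₁ := by
        rcases hy1 with ⟨_, h⟩ | ⟨h, _⟩
        · exact h
        · exact absurd h (by simp)
      have hr2 : r <+: q.pl m₂ := by
        rcases hy2 with ⟨_, h⟩ | ⟨h, _⟩
        · exact h
        · exact absurd h (by simp)
      have := hC2 r hr1 hr2 (q.pr l) hprS hxl'
      rw [hq.pl_pr l hl] at this
      exact Or.inl ⟨rfl, this⟩
  · -- x is a node of the positive tree
    have hx' : q.tp.valid p := hx
    obtain ⟨m₁, m₂, h1l, h2l, h1p, h2p, hC1, hC2⟩ :=
      main_exists q.tp q.pr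
        (fun m m' hm hm' h => by
          have := congrArg q.pl h
          rwa [hq.pl_pr m hm, hq.pl_pr m' hm'] at this) hx'
    refine ⟨m₁, m₂, h1l, h2l, Or.inl ⟨rfl, h1p⟩, Or.inl ⟨rfl, h2p⟩, ?_⟩
    rintro ⟨c, r⟩ hy1 hy2 l hl hxl
    have hxl' : p <+: l := by
      rcases hxl with ⟨_, h⟩ | ⟨h, _⟩
      · exact h
      · exact absurd h (by simp)
    cases c
    · -- y in the negative tree
      have hr1 : r <+: q.pr m₁ := by
        rcases hy1 with ⟨h, _⟩ | ⟨_, h⟩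
        · exact absurd h (by simp)
        · exact h
      have hr2 : r <+: q.pr m₂ := by
        rcases hy2 with ⟨h, _⟩ | ⟨_, h⟩
        · exact absurd h (by simp)
        · exact h
      exact Or.inr ⟨rfl, hC2 r hr1 hr2 l hl hxl'⟩
    · -- y in the positive tree
      have hr1 : r <+: m₁ := by
        rcases hy1 with ⟨_, h⟩ | ⟨h, _⟩
        · exact h
        · exact absurd h (by simp)
      have hr2 : r <+: m₂ := by
        rcases hy2 with ⟨_, h⟩ | ⟨h, _⟩
        · exact h
        · exact absurd h (by simp)
      exact Or.inl ⟨rfl, (hC1 r hr1 hr2).trans hxl'⟩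

/-! ### Sign and `gam` lemmas -/

lemma sign_pm (l : List (Fin 3)) :
    Couple.sign (true, l) = 1 ∨ Couple.sign (true, l) = -1 := by
  have h : Couple.sign (true, l) = (-1) ^ (l.count (1 : Fin 3)) := by
    simp [Couple.sign, nodeSign]
  rw [h]
  rcases Nat.even_or_odd (l.count (1 : Fin 3)) with h | h
  · left; exact h.neg_one_pow
  · right; exact h.neg_one_pow

lemma eps_eq {q : Couple} {l : List (Fin 3)} (y : CNode) :
    ind1 y (q.posLeaf l) - ind1 y (q.negLeaf l) =
      if y ∈ q.pairSet l then Couple.sign (true, l) * (if y.1 = true then 1 else -1)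
      else 0 := by
  rcases y with ⟨b, r⟩
  have hpair : ((b, r) : CNode) ∈ q.pairSet l ↔
      (b = true ∧ r <+: l) ∨ (b = false ∧ r <+: q.pr l) := Iff.rfl
  rcases sign_pm l with hs | hs
  · rw [Couple.posLeaf, Couple.negLeaf, if_pos hs, if_pos hs, hs]
    cases b <;> simp only [ind1, anc, hpair] <;> split_ifs <;> simp_all
  · rw [Couple.posLeaf, Couple.negLeaf, if_neg (by rw [hs]; norm_num),
      if_neg (by rw [hs]; norm_num), hs]
    cases b <;> simp only [ind1, anc, hpair] <;> split_ifs <;> simp_all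

lemma gam_eq {q : Couple} (l₁ l₂ : List (Fin 3)) (y : CNode) :
    gam q y l₁ l₂ =
      if y ∈ q.pairSet l₁ ∧ y ∈ q.pairSet l₂ then
        Couple.sign (true, l₁) * Couple.sign (true, l₂)
      else 0 := by
  unfold gam
  rw [eps_eq y, eps_eq y]
  by_cases k₁ : y ∈ q.pairSet l₁ <;> by_cases k₂ : y ∈ q.pairSet l₂
  · rw [if_pos k₁, if_pos k₂, if_pos (show y ∈ q.pairSet l₁ ∧ y ∈ q.pairSet l₂ from ⟨k₁, k₂⟩)]
    split_ifs <;> ring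
  · rw [if_pos k₁, if_neg k₂, if_neg (fun h : y ∈ q.pairSet l₁ ∧ y ∈ q.pairSet l₂ => k₂ h.2), mul_zero]
  · rw [if_neg k₁, if_pos k₂, if_neg (fun h : y ∈ q.pairSet l₁ ∧ y ∈ q.pairSet l₂ => k₁ h.1), zero_mul]
  · rw [if_neg k₁, if_neg k₂, if_neg (fun h : y ∈ q.pairSet l₁ ∧ y ∈ q.pairSet l₂ => k₁ h.1), zero_mul]


/-- For a map `λ` on the nodes of a couple, the following are
equivalent: (i) `λ` sums to zero on every conjugacy class; (ii) `λ` sums to zero on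
every element `A_{p₁} ∩ A_{p₂}` of `U^q`; (iii) `∑_x λ_x Γ^q_x = 0`. -/
theorem statement6 (q : Couple) (hq : q.IsCouple) (lam : CNode → ℂ) :
    ((∀ x : CNode, q.isNode x → (∑ᶠ y ∈ {y : CNode | q.isNode y ∧ q.Conj x y}, lam y) = 0) ↔
      (∀ l₁ l₂, q.tp.isLeaf l₁ → q.tp.isLeaf l₂ →
        (∑ᶠ y ∈ q.pairSet l₁ ∩ q.pairSet l₂, lam y) = 0)) ∧
    ((∀ l₁ l₂, q.tp.isLeaf l₁ → q.tp.isLeaf l₂ →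
        (∑ᶠ y ∈ q.pairSet l₁ ∩ q.pairSet l₂, lam y) = 0) ↔
      (∀ l₁ l₂, q.tp.isLeaf l₁ → q.tp.isLeaf l₂ →
        (∑ᶠ y ∈ {y : CNode | q.isNode y}, lam y * (gam q y l₁ l₂ : ℂ)) = 0)) := by
  classical
  have hLf : {l | q.tp.isLeaf l}.Finite := q.tp.finite_isLeaf
  have hN : {x : CNode | q.isNode x}.Finite := finite_isNode q
  set F : Finset CNode := hN.toFinset with hF
  set Lf : Finset (List (Fin 3)) := hLf.toFinset with hLfdef
  set pat : CNode → Finset (List (Fin 3)) :=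
    fun y => Lf.filter (fun l => y ∈ q.pairSet l) with hpatdef
  have hmemF : ∀ x : CNode, x ∈ F ↔ q.isNode x := fun x => Set.Finite.mem_toFinset hN
  have hmemLf : ∀ l, l ∈ Lf ↔ q.tp.isLeaf l := fun l => Set.Finite.mem_toFinset hLf
  have hmempat : ∀ (y : CNode) l, l ∈ pat y ↔ (q.tp.isLeaf l ∧ y ∈ q.pairSet l) := by
    intro y l
    rw [hpatdef]
    simp only [Finset.mem_filter, hmemLf]
  have hConj : ∀ x y : CNode, q.Conj x y ↔ pat x = pat y := by
    intro x y
    constructor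
    · intro h
      ext l
      simp only [hmempat]
      rcases Classical.em (q.tp.isLeaf l) with hl | hl
      · rcases h l hl with ⟨h1, h2⟩ | ⟨h1, h2⟩ <;> tauto
      · tauto
    · intro h l hl
      have := Finset.ext_iff.mp h l
      simp only [hmempat, hl, true_and] at this
      tauto
  have hclass : ∀ x : CNode,
      {y : CNode | q.isNode y ∧ q.Conj x y} = ↑(F.filter (fun y => pat y = pat x)) := by
    intro x
    ext y
    simp only [Set.mem_setOf_eq, Finset.coe_filter, hmemF, hConj, eq_comm]
  have hinter : ∀ l₁ l₂, q.tp.isLeaf l₁ → q.tp.isLeaf l₂ →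
      q.pairSet l₁ ∩ q.pairSet l₂
        = ↑(F.filter (fun y => y ∈ q.pairSet l₁ ∧ y ∈ q.pairSet l₂)) := by
    intro l₁ l₂ h₁ h₂
    ext y
    simp only [Set.mem_inter_iff, Finset.coe_filter, Set.mem_setOf_eq, hmemF]
    exact ⟨fun ⟨a, b⟩ => ⟨isNode_of_mem_pairSet hq h₁ a, a, b⟩, fun ⟨_, a, b⟩ => ⟨a, b⟩⟩
  have hfiber : ∀ l₁ l₂ (x₀ : CNode), x₀ ∈ q.pairSet l₁ → x₀ ∈ q.pairSet l₂ →
      q.tp.isLeaf l₁ → q.tp.isLeaf l₂ →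
      (F.filter (fun y => y ∈ q.pairSet l₁ ∧ y ∈ q.pairSet l₂)).filter
          (fun y => pat y = pat x₀)
        = F.filter (fun y => pat y = pat x₀) := by
    intro l₁ l₂ x₀ h1 h2 hl1 hl2
    ext y
    simp only [Finset.mem_filter]
    constructor
    · rintro ⟨⟨a, _, _⟩, b⟩; exact ⟨a, b⟩
    · rintro ⟨a, b⟩
      refine ⟨⟨a, ?_, ?_⟩, b⟩
      · have hm : l₁ ∈ pat y := by rw [b]; exact (hmempat _ _).mpr ⟨hl1, h1⟩
        exact ((hmempat _ _).mp hm).2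
      · have hm : l₂ ∈ pat y := by rw [b]; exact (hmempat _ _).mpr ⟨hl2, h2⟩
        exact ((hmempat _ _).mp hm).2
  -- the main equivalence in `Finset` form
  have main1 : (∀ x : CNode, q.isNode x →
        (∑ y ∈ F.filter (fun y => pat y = pat x), lam y) = 0) ↔
      (∀ l₁ l₂, q.tp.isLeaf l₁ → q.tp.isLeaf l₂ →
        (∑ y ∈ F.filter (fun y => y ∈ q.pairSet l₁ ∧ y ∈ q.pairSet l₂), lam y) = 0) := by
    constructor
    · intro h l₁ l₂ h₁ h₂
      rw [← Finset.sum_fiberwise_of_maps_to (g := pat)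
        (t := (F.filter (fun y => y ∈ q.pairSet l₁ ∧ y ∈ q.pairSet l₂)).image pat)
        (fun y hy => Finset.mem_image_of_mem pat hy) lam]
      apply Finset.sum_eq_zero
      intro c hc
      obtain ⟨x₀, hx₀, rfl⟩ := Finset.mem_image.mp hc
      have hx₀' := Finset.mem_filter.mp hx₀
      rw [hfiber l₁ l₂ x₀ hx₀'.2.1 hx₀'.2.2 h₁ h₂]
      exact h x₀ ((hmemF _).mp hx₀'.1)
    · intro h
      suffices H : ∀ n, ∀ x : CNode, q.isNode x → Lf.card - (pat x).card < n →
          (∑ y ∈ F.filter (fun y => pat y = pat x), lam y) = 0 by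
        intro x hx
        exact H (Lf.card + 1) x hx (by omega)
      intro n
      induction n with
      | zero => intro x hx h'; omega
      | succ n ih =>
        intro x hx hcard
        obtain ⟨l₁, l₂, hl₁, hl₂, hx1, hx2, hKEY⟩ := exists_good_pair hq hx
        have hs0 : ∑ y ∈ F.filter (fun y => y ∈ q.pairSet l₁ ∧ y ∈ q.pairSet l₂),
            lam y = 0 := h l₁ l₂ hl₁ hl₂
        rw [← Finset.sum_fiberwise_of_maps_to (g := pat)
          (t := (F.filter (fun y => y ∈ q.pairSet l₁ ∧ y ∈ q.pairSet l₂)).image pat)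
          (fun y hy => Finset.mem_image_of_mem pat hy) lam] at hs0
        have hxs : x ∈ F.filter (fun y => y ∈ q.pairSet l₁ ∧ y ∈ q.pairSet l₂) :=
          Finset.mem_filter.mpr ⟨(hmemF x).mpr hx, hx1, hx2⟩
        rw [← Finset.add_sum_erase _ _ (Finset.mem_image_of_mem pat hxs)] at hs0
        have hrest : ∑ c ∈ ((F.filter (fun y => y ∈ q.pairSet l₁ ∧ y ∈ q.pairSet l₂)).image
            pat).erase (pat x),
            (∑ y ∈ (F.filter (fun y => y ∈ q.pairSet l₁ ∧ y ∈ q.pairSet l₂)).filter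
              (fun y => pat y = c), lam y) = 0 := by
          apply Finset.sum_eq_zero
          intro c hc
          have hcne : c ≠ pat x := (Finset.mem_erase.mp hc).1
          obtain ⟨x₀, hx₀, rfl⟩ := Finset.mem_image.mp (Finset.mem_erase.mp hc).2
          have hx₀' := Finset.mem_filter.mp hx₀
          rw [hfiber l₁ l₂ x₀ hx₀'.2.1 hx₀'.2.2 hl₁ hl₂]
          apply ih x₀ ((hmemF _).mp hx₀'.1)
          have hsub : pat x ⊆ pat x₀ := by
            intro l hl
            obtain ⟨hll, hxl⟩ := (hmempat _ _).mp hl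
            exact (hmempat _ _).mpr ⟨hll, hKEY x₀ hx₀'.2.1 hx₀'.2.2 l hll hxl⟩
          have hlt : (pat x).card < (pat x₀).card :=
            Finset.card_lt_card (hsub.ssubset_of_ne (fun hh => hcne (hh ▸ rfl)))
          have hle : (pat x₀).card ≤ Lf.card :=
            Finset.card_le_card (Finset.filter_subset _ _)
          omega
        rw [hrest, add_zero] at hs0
        rw [← hfiber l₁ l₂ x hx1 hx2 hl₁ hl₂]
        exact hs0
  constructor
  · -- (i) ↔ (ii)
    constructor
    · intro h l₁ l₂ h₁ h₂
      rw [hinter l₁ l₂ h₁ h₂, finsum_mem_coe_finset]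
      exact main1.mp (fun x hx => by
        rw [← finsum_mem_coe_finset, ← hclass x]; exact h x hx) l₁ l₂ h₁ h₂
    · intro h x hx
      rw [hclass x, finsum_mem_coe_finset]
      exact main1.mpr (fun l₁ l₂ h₁ h₂ => by
        rw [← finsum_mem_coe_finset, ← hinter l₁ l₂ h₁ h₂]; exact h l₁ l₂ h₁ h₂) x hx
  · -- (ii) ↔ (iii)
    have hNset : {y : CNode | q.isNode y} = (↑F : Set CNode) := by
      ext y; simp [hmemF]
    have hsignne : ∀ l, (Couple.sign (true, l) : ℤ) ≠ 0 := by
      intro l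
      rcases sign_pm l with h | h <;> rw [h] <;> norm_num
    have hIII : ∀ l₁ l₂, q.tp.isLeaf l₁ → q.tp.isLeaf l₂ →
        (∑ᶠ y ∈ {y : CNode | q.isNode y}, lam y * (gam q y l₁ l₂ : ℂ))
          = ((Couple.sign (true, l₁) * Couple.sign (true, l₂) : ℤ) : ℂ) *
            ∑ᶠ y ∈ q.pairSet l₁ ∩ q.pairSet l₂, lam y := by
      intro l₁ l₂ h₁ h₂
      rw [hNset, finsum_mem_coe_finset, hinter l₁ l₂ h₁ h₂, finsum_mem_coe_finset]
      rw [← Finset.sum_filter_of_ne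
        (p := fun y => y ∈ q.pairSet l₁ ∧ y ∈ q.pairSet l₂) (s := F)
        (f := fun y => lam y * (gam q y l₁ l₂ : ℂ))
        (fun y _ hy => by
          by_contra hmem
          apply hy
          show lam y * (gam q y l₁ l₂ : ℂ) = 0
          rw [gam_eq l₁ l₂ y, if_neg hmem]
          simp)]
      rw [Finset.mul_sum]
      apply Finset.sum_congr rfl
      intro y hy
      have hy' := (Finset.mem_filter.mp hy).2
      rw [gam_eq l₁ l₂ y, if_pos hy']
      push_cast
      ring
    constructor
    · intro h l₁ l₂ h₁ h₂
      rw [hIII l₁ l₂ h₁ h₂, h l₁ l₂ h₁ h₂, mul_zero]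
    · intro h l₁ l₂ h₁ h₂
      have := h l₁ l₂ h₁ h₂
      rw [hIII l₁ l₂ h₁ h₂] at this
      rcases mul_eq_zero.mp this with h' | h'
      · exfalso
        rw [Int.cast_eq_zero] at h'
        exact (mul_ne_zero (hsignne l₁) (hsignne l₂)) h'
      · exact h'


end WickNLS

end
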